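/- Let A be a measurable set and set F*(A) = F(A) ∩ Aᶜ and P*(A) = P(A) ∩ Aᶜ. The following are equivalent: (i) A is T-convex; (ii) F*(A) ∩ P*(A) = ∅ a.e.; (iii) F*(A) is T-invariant; (iv) P*(A) is T-co-invariant; (v) there exist a T-invariant set B and a T-co-invariant set C with A = B ∩ C a.e. -/

import Mathlib

open MeasureTheory ENNReal Filter Set

noncomputable section

namespace PaperAtoms

variable {Ω : Type*} [MeasurableSpace Ω] {μ : MeasureTheory.Measure Ω} {p : ℝ≥0∞} [Fact (1 ≤ p)]

/-- `T` is a positive operator on `Lp`. -/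
def IsPositiveOp (T : Lp ℝ p μ →L[ℝ] Lp ℝ p μ) : Prop :=
  ∀ f : Lp ℝ p μ, 0 ≤ f → 0 ≤ T f

/-- A measurable set `A` is `T`-invariant if `T f` vanishes a.e. on `Aᶜ` for every
nonnegative `f ∈ Lp` vanishing a.e. on `Aᶜ`. -/
def Invariant (T : Lp ℝ p μ →L[ℝ] Lp ℝ p μ) (A : Set Ω) : Prop :=
  MeasurableSet A ∧
    ∀ f : Lp ℝ p μ, 0 ≤ f → (∀ᵐ x ∂μ, x ∉ A → f x = 0) → ∀ᵐ x ∂μ, x ∉ A → T f x = 0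

/-- `A` is `T`-co-invariant if `Aᶜ` is `T`-invariant. -/
def CoInvariant (T : Lp ℝ p μ →L[ℝ] Lp ℝ p μ) (A : Set Ω) : Prop :=
  Invariant T Aᶜ

/-- `A` is `T`-admissible if it belongs to the σ-field generated by the `T`-invariant sets. -/
def Admissible (T : Lp ℝ p μ →L[ℝ] Lp ℝ p μ) (A : Set Ω) : Prop :=
  MeasurableSet[MeasurableSpace.generateFrom {B : Set Ω | Invariant T B}] A

/-- A `T`-atom is a minimal `T`-admissible set with positive measure. -/
def Atom (T : Lp ℝ p μ →L[ℝ] Lp ℝ p μ) (A : Set Ω) : Prop :=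
  Admissible T A ∧ 0 < μ A ∧
    ∀ B : Set Ω, Admissible T B → B ≤ᵐ[μ] A → μ B = 0 ∨ B =ᵐ[μ] A

/-- `FA` is (a version of) the future of `A`: the minimal `T`-invariant set containing `A` a.e. -/
def IsFuture (T : Lp ℝ p μ →L[ℝ] Lp ℝ p μ) (A FA : Set Ω) : Prop :=
  Invariant T FA ∧ A ≤ᵐ[μ] FA ∧
    ∀ B : Set Ω, Invariant T B → A ≤ᵐ[μ] B → FA ≤ᵐ[μ] B

/-- `PA` is (a version of) the past of `A`: the minimal `T`-co-invariant set containing `A` a.e. -/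
def IsPast (T : Lp ℝ p μ →L[ℝ] Lp ℝ p μ) (A PA : Set Ω) : Prop :=
  CoInvariant T PA ∧ A ≤ᵐ[μ] PA ∧
    ∀ B : Set Ω, CoInvariant T B → A ≤ᵐ[μ] B → PA ≤ᵐ[μ] B

/-- `A` is `T`-convex if `A = F(A) ∩ P(A)` a.e. -/
def Convexe (T : Lp ℝ p μ →L[ℝ] Lp ℝ p μ) (A : Set Ω) : Prop :=
  MeasurableSet A ∧
    ∃ FA PA : Set Ω, IsFuture T A FA ∧ IsPast T A PA ∧ A =ᵐ[μ] (FA ∩ PA : Set Ω)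

/-- Multiplication by the indicator function of `A`, as a bounded operator on `Lp`
(defined as `0` if `A` is not measurable). -/
def indicatorCLM (μ : MeasureTheory.Measure Ω) (p : ℝ≥0∞) [Fact (1 ≤ p)] (A : Set Ω) :
    Lp ℝ p μ →L[ℝ] Lp ℝ p μ := by
  classical
  exact if hA : MeasurableSet A then
    LinearMap.mkContinuous
      { toFun := fun f => ((Lp.memLp f).indicator hA).toLp (A.indicator f)
        map_add' := fun f g => by
          have hf : MemLp (A.indicator f) p μ := (Lp.memLp f).indicator hA
          have hg : MemLp (A.indicator g) p μ := (Lp.memLp g).indicator hA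
          rw [← MemLp.toLp_add hf hg]
          refine MemLp.toLp_congr _ _ ?_
          filter_upwards [Lp.coeFn_add f g] with x hx
          rw [Pi.add_apply, Set.indicator_apply, Set.indicator_apply, Set.indicator_apply, hx]
          split_ifs <;> simp
        map_smul' := fun c f => by
          have hf : MemLp (A.indicator f) p μ := (Lp.memLp f).indicator hA
          rw [RingHom.id_apply, ← MemLp.toLp_const_smul c hf]
          refine MemLp.toLp_congr _ _ ?_
          filter_upwards [Lp.coeFn_smul c f] with x hx
          rw [Pi.smul_apply, Set.indicator_apply, Set.indicator_apply, hx]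
          split_ifs <;> simp }
      1
      (fun f => by
        simp only [LinearMap.coe_mk, AddHom.coe_mk, one_mul]
        rw [Lp.norm_toLp, Lp.norm_def]
        exact ENNReal.toReal_mono (Lp.eLpNorm_ne_top f) (eLpNorm_indicator_le _))
  else 0

/-- The restriction `T_A = 1_A T 1_A` of `T` to a measurable set `A`. -/
def restrictOp (T : Lp ℝ p μ →L[ℝ] Lp ℝ p μ) (A : Set Ω) : Lp ℝ p μ →L[ℝ] Lp ℝ p μ :=
  (indicatorCLM μ p A).comp (T.comp (indicatorCLM μ p A))

/-- The spectral radius of a bounded operator, via Gelfand's formula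
`ρ(T) = inf_n ‖Tⁿ‖^(1/n) = lim_n ‖Tⁿ‖^(1/n)`. -/
def specRadius (T : Lp ℝ p μ →L[ℝ] Lp ℝ p μ) : ℝ :=
  ⨅ n : ℕ, ‖T ^ (n + 1)‖ ^ (((n : ℝ) + 1)⁻¹)

/-- The spectral radius `ρ(A)` of the restriction of `T` to `A`. -/
def rhoSet (T : Lp ℝ p μ →L[ℝ] Lp ℝ p μ) (A : Set Ω) : ℝ :=
  specRadius (restrictOp T A)

/-- A measurable set `A` with `μ A > 0` is `T`-irreducible if the restriction of `T` to `A`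
is irreducible, i.e. every `T_A`-invariant subset of `A` is a.e. trivial. -/
def Irreducible (T : Lp ℝ p μ →L[ℝ] Lp ℝ p μ) (A : Set Ω) : Prop :=
  MeasurableSet A ∧ 0 < μ A ∧
    ∀ B : Set Ω, Invariant (restrictOp T A) B → B ≤ᵐ[μ] A → μ B = 0 ∨ B =ᵐ[μ] A

/-- `T` is power compact if some power `T^k`, `k ≥ 1`, is a compact operator. -/
def PowerCompact (T : Lp ℝ p μ →L[ℝ] Lp ℝ p μ) : Prop :=
  ∃ k : ℕ, 1 ≤ k ∧ IsCompactOperator (⇑(T ^ k))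

/-- `B ≼ A` for atoms: `B ⊆ F(A)` a.e. -/
def Prec (T : Lp ℝ p μ →L[ℝ] Lp ℝ p μ) (B A : Set Ω) : Prop :=
  ∃ FA : Set Ω, IsFuture T A FA ∧ B ≤ᵐ[μ] FA

/-- `B ≺ A` for atoms: `B ⊆ F(A)` a.e. and `B ≠ A` a.e. -/
def PrecStrict (T : Lp ℝ p μ →L[ℝ] Lp ℝ p μ) (B A : Set Ω) : Prop :=
  Prec T B A ∧ ¬ (B =ᵐ[μ] A)

/-- A critical atom: a `T`-atom whose spectral radius equals that of `T`. -/
def CriticalAtom (T : Lp ℝ p μ →L[ℝ] Lp ℝ p μ) (A : Set Ω) : Prop :=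
  Atom T A ∧ rhoSet T A = specRadius T

/-- There is a chain `A = A_0 ≻ A_1 ≻ ⋯ ≻ A_n` of critical atoms starting at `A`. -/
def ChainFrom (T : Lp ℝ p μ →L[ℝ] Lp ℝ p μ) (A : Set Ω) (n : ℕ) : Prop :=
  ∃ c : ℕ → Set Ω, c 0 = A ∧ (∀ i ≤ n, CriticalAtom T (c i)) ∧
    ∀ i < n, PrecStrict T (c (i + 1)) (c i)

/-- The generalized eigenspace `⋃ₖ ker (T - λ id)^k` of `T` at `λ`. -/
def genEigenspace (T : Lp ℝ p μ →L[ℝ] Lp ℝ p μ) (l : ℝ) : Submodule ℝ (Lp ℝ p μ) :=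
  ⨆ k : ℕ, LinearMap.ker ((T - l • (1 : Lp ℝ p μ →L[ℝ] Lp ℝ p μ)) ^ k).toLinearMap

/-- The algebraic multiplicity of `λ` for `T`. -/
def algMult (T : Lp ℝ p μ →L[ℝ] Lp ℝ p μ) (l : ℝ) : ℕ :=
  Module.finrank ℝ ↥(genEigenspace T l)

/-- The set of `k` at which the kernels of `(T - ρ(T) id)^k` stabilize; the ascent of `T`
at `ρ(T)` is its infimum. -/
def ascentSet (T : Lp ℝ p μ →L[ℝ] Lp ℝ p μ) : Set ℕ :=
  {k : ℕ | LinearMap.ker ((T - specRadius T • (1 : Lp ℝ p μ →L[ℝ] Lp ℝ p μ)) ^ k).toLinearMap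
      = LinearMap.ker ((T - specRadius T • (1 : Lp ℝ p μ →L[ℝ] Lp ℝ p μ)) ^ (k + 1)).toLinearMap}

/-- `D` is (a version of) the set `T(C)`, i.e. the support of `T(1_C f)` for any a.e.
positive `f ∈ Lp`. -/
def IsImage (T : Lp ℝ p μ →L[ℝ] Lp ℝ p μ) (C D : Set Ω) : Prop :=
  MeasurableSet C ∧ MeasurableSet D ∧
    ∀ f : Lp ℝ p μ, (∀ᵐ x ∂μ, 0 < f x) →
      D =ᵐ[μ] ({x | T (indicatorCLM μ p C f) x ≠ 0} : Set Ω)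

/-- `D` is (a version of) the `k`-fold iterated image `T^k(C)`. -/
def IsIterImage (T : Lp ℝ p μ →L[ℝ] Lp ℝ p μ) : ℕ → Set Ω → Set Ω → Prop
  | 0, C, D => D = C
  | (k + 1), C, D => ∃ E : Set Ω, IsIterImage T k C E ∧ IsImage T E D

variable {Ω : Type*} [MeasurableSpace Ω] {μ : MeasureTheory.Measure Ω} {p : ℝ≥0∞}

/-!
Everything turns on the null set `F*(A) ∩ P*(A)`. Since `A ⊆ F(A) ∩ P(A)`, convexity says
exactly that this set is null, and any representation `A = B ∩ C` with `B` invariant and `C`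
co-invariant forces it, because `F(A) ⊆ B` and `P(A) ⊆ C`. When it is null, `F*(A)` agrees a.e.
with `F(A) ∩ P(A)ᶜ`, an intersection of invariant sets, and dually `P*(A)` with the co-invariant
`P(A) ∩ F(A)ᶜ`. Conversely, if `F*(A)` is invariant then its complement is a co-invariant set
containing `A`, hence contains `P(A)`; dually for `P*(A)`.
-/

section

variable [Fact (1 ≤ p)] {T : Lp ℝ p μ →L[ℝ] Lp ℝ p μ} {A B C F P FA PA : Set Ω}

theorem coeFn_indicatorCLM (hB : MeasurableSet B) (f : Lp ℝ p μ) :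
    ⇑(indicatorCLM μ p B f) =ᵐ[μ] B.indicator ⇑f := by
  rw [indicatorCLM, dif_pos hB]
  simp only [LinearMap.mkContinuous_apply, LinearMap.coe_mk, AddHom.coe_mk]
  exact MemLp.coeFn_toLp _

theorem coInvariant_compl_iff : CoInvariant T Bᶜ ↔ Invariant T B := by
  rw [CoInvariant, compl_compl]

theorem Invariant.congr (hB : Invariant T B) (hC : MeasurableSet C) (hBC : B =ᵐ[μ] C) :
    Invariant T C := by
  refine ⟨hC, fun f hf hfC => ?_⟩
  have hBC' := eventuallyEq_set.mp hBC
  have hfB : ∀ᵐ x ∂μ, x ∉ B → f x = 0 := by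
    filter_upwards [hfC, hBC'] with x hx hx' hxB using hx (hxB ∘ hx'.mpr)
  filter_upwards [hB.2 f hf hfB, hBC'] with x hx hx' hxC using hx (hxC ∘ hx'.mp)

theorem Invariant.inter (hB : Invariant T B) (hC : Invariant T C) : Invariant T (B ∩ C) := by
  refine ⟨hB.1.inter hC.1, fun f hf hfBC => ?_⟩
  have hfB : ∀ᵐ x ∂μ, x ∉ B → f x = 0 := by
    filter_upwards [hfBC] with x hx hxB using hx fun h => hxB h.1
  have hfC : ∀ᵐ x ∂μ, x ∉ C → f x = 0 := by
    filter_upwards [hfBC] with x hx hxC using hx fun h => hxC h.2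
  filter_upwards [hB.2 f hf hfB, hC.2 f hf hfC] with x hxB hxC hx
  by_cases h : x ∈ B
  · exact hxC fun h' => hx ⟨h, h'⟩
  · exact hxB h

-- Split `f = 1_B f + 1_Bᶜ f` into nonnegative pieces vanishing off `B` and off `C`.
theorem Invariant.union (hB : Invariant T B) (hC : Invariant T C) : Invariant T (B ∪ C) := by
  refine ⟨hB.1.union hC.1, fun f hf hfBC => ?_⟩
  set g := indicatorCLM μ p B f
  have hf' : 0 ≤ᵐ[μ] ⇑f := Lp.coeFn_nonneg f |>.mpr hf
  have hg : ⇑g =ᵐ[μ] B.indicator ⇑f := coeFn_indicatorCLM hB.1 f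
  have hfg : ⇑(f - g) =ᵐ[μ] Bᶜ.indicator ⇑f := by
    filter_upwards [Lp.coeFn_sub f g, hg] with x hx hgx
    rw [hx, Set.indicator_compl, Pi.sub_apply, Pi.sub_apply, hgx]
  have hg_nonneg : 0 ≤ g := by
    rw [← Lp.coeFn_nonneg]
    filter_upwards [hg, hf'] with x hx hfx
    rw [hx]
    exact Set.indicator_nonneg (fun _ _ => hfx) x
  have hfg_nonneg : 0 ≤ f - g := by
    rw [← Lp.coeFn_nonneg]
    filter_upwards [hfg, hf'] with x hx hfx
    rw [hx]
    exact Set.indicator_nonneg (fun _ _ => hfx) x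
  have hgB : ∀ᵐ x ∂μ, x ∉ B → g x = 0 := by
    filter_upwards [hg] with x hx hxB
    rw [hx, Set.indicator_of_notMem hxB]
  have hfgC : ∀ᵐ x ∂μ, x ∉ C → (f - g) x = 0 := by
    filter_upwards [hfg, hfBC] with x hx hfx hxC
    rw [hx]
    by_cases h : x ∈ B
    · exact Set.indicator_of_notMem (not_not_intro h) _
    · rw [Set.indicator_of_mem (show x ∈ Bᶜ from h)]
      exact hfx (fun h' => h'.elim h hxC)
  have hTf : T f = T g + T (f - g) := by rw [← map_add, add_sub_cancel]
  filter_upwards [hTf ▸ Lp.coeFn_add (T g) (T (f - g)), hB.2 g hg_nonneg hgB,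
    hC.2 (f - g) hfg_nonneg hfgC] with x hx hTg hTfg hxBC
  rw [hx, Pi.add_apply, hTg fun h => hxBC (.inl h), hTfg fun h => hxBC (.inr h), add_zero]

theorem CoInvariant.congr (hB : CoInvariant T B) (hC : MeasurableSet C) (hBC : B =ᵐ[μ] C) :
    CoInvariant T C :=
  Invariant.congr hB hC.compl hBC.compl

theorem CoInvariant.inter (hB : CoInvariant T B) (hC : CoInvariant T C) :
    CoInvariant T (B ∩ C) := by
  rw [CoInvariant, compl_inter]
  exact hB.union hC

theorem IsFuture.measure_inter_eq_zero (hFA : IsFuture T A FA) (hC : CoInvariant T C)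
    (hAC : Disjoint A C) : μ (FA ∩ C) = 0 := by
  have hF := hFA.2.2 Cᶜ hC (.of_forall hAC.subset_compl_right)
  rw [measure_eq_zero_iff_ae_notMem]
  filter_upwards [hF] with x hx h using hx h.1 h.2

theorem IsPast.measure_inter_eq_zero (hPA : IsPast T A PA) (hB : Invariant T B)
    (hAB : Disjoint A B) : μ (PA ∩ B) = 0 := by
  have hP := hPA.2.2 Bᶜ (coInvariant_compl_iff.mpr hB) (.of_forall hAB.subset_compl_right)
  rw [measure_eq_zero_iff_ae_notMem]
  filter_upwards [hP] with x hx h using hx h.1 h.2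

theorem ae_eq_inter_of_measure_eq_zero (hAF : A ≤ᵐ[μ] F) (hAP : A ≤ᵐ[μ] P)
    (h : μ ((F ∩ Aᶜ) ∩ (P ∩ Aᶜ)) = 0) : A =ᵐ[μ] (F ∩ P : Set Ω) := by
  rw [eventuallyEq_set]
  filter_upwards [measure_eq_zero_iff_ae_notMem.mp h, hAF, hAP] with x hx hxF hxP
  simp only [mem_inter_iff, mem_compl_iff] at hx ⊢
  tauto

theorem inter_compl_ae_eq_of_measure_eq_zero (hAP : A ≤ᵐ[μ] P)
    (h : μ ((F ∩ Aᶜ) ∩ (P ∩ Aᶜ)) = 0) : (F ∩ Aᶜ : Set Ω) =ᵐ[μ] (F ∩ Pᶜ : Set Ω) := by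
  rw [eventuallyEq_set]
  filter_upwards [measure_eq_zero_iff_ae_notMem.mp h, hAP] with x hx hxP
  simp only [mem_inter_iff, mem_compl_iff] at hx ⊢
  tauto

end

theorem statement10_general [Fact (1 ≤ p)]
    (T : Lp ℝ p μ →L[ℝ] Lp ℝ p μ)
    (A : Set Ω) (hA : MeasurableSet A) (FA PA : Set Ω)
    (hFA : IsFuture T A FA) (hPA : IsPast T A PA) :
    List.TFAE
      [ Convexe T A,
        μ ((FA ∩ Aᶜ) ∩ (PA ∩ Aᶜ)) = 0,
        Invariant T (FA ∩ Aᶜ),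
        CoInvariant T (PA ∩ Aᶜ),
        ∃ B C : Set Ω, Invariant T B ∧ CoInvariant T C ∧ A =ᵐ[μ] (B ∩ C : Set Ω) ] := by
  have hFA_meas : MeasurableSet FA := hFA.1.1
  have hPA_meas : MeasurableSet PA := hPA.1.1.of_compl
  tfae_have 1 → 5 := fun ⟨_, F, P, hF, hP, hAFP⟩ => ⟨F, P, hF.1, hP.1, hAFP⟩
  tfae_have 5 → 2 := by
    rintro ⟨B, C, hB, hC, hABC⟩
    rw [measure_eq_zero_iff_ae_notMem]
    filter_upwards [hFA.2.2 B hB (hABC.le.trans (.of_forall inter_subset_left)),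
      hPA.2.2 C hC (hABC.le.trans (.of_forall inter_subset_right)),
      eventuallyEq_set.mp hABC] with x hxB hxC hx h
    exact h.1.2 (hx.mpr ⟨hxB h.1.1, hxC h.2.1⟩)
  tfae_have 2 → 1 := fun h =>
    ⟨hA, FA, PA, hFA, hPA, ae_eq_inter_of_measure_eq_zero hFA.2.1 hPA.2.1 h⟩
  tfae_have 2 → 3 := fun h =>
    (hFA.1.inter hPA.1).congr (hFA_meas.inter hA.compl)
      (inter_compl_ae_eq_of_measure_eq_zero hPA.2.1 h).symm
  tfae_have 3 → 2 := fun h => by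
    refine measure_mono_null (fun _ hx => ?_)
      (hPA.measure_inter_eq_zero h (disjoint_compl_right.mono_right inter_subset_right))
    exact ⟨hx.2.1, hx.1⟩
  tfae_have 2 → 4 := fun h =>
    (hPA.1.inter (coInvariant_compl_iff.mpr hFA.1)).congr (hPA_meas.inter hA.compl)
      (inter_compl_ae_eq_of_measure_eq_zero hFA.2.1 (by rwa [inter_comm])).symm
  tfae_have 4 → 2 := fun h => by
    refine measure_mono_null (fun _ hx => ?_)
      (hFA.measure_inter_eq_zero h (disjoint_compl_right.mono_right inter_subset_right))
    exact ⟨hx.1.1, hx.2⟩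
  tfae_finish

theorem statement10 [SigmaFinite μ] (hμ : μ Set.univ ≠ 0) [Fact (1 ≤ p)]
    (hp : 1 < p) (hp' : p ≠ ∞)
    (T : Lp ℝ p μ →L[ℝ] Lp ℝ p μ) (hT : IsPositiveOp T)
    (A : Set Ω) (hA : MeasurableSet A) (FA PA : Set Ω)
    (hFA : IsFuture T A FA) (hPA : IsPast T A PA) :
    List.TFAE
      [ Convexe T A,
        μ ((FA ∩ Aᶜ) ∩ (PA ∩ Aᶜ)) = 0,
        Invariant T (FA ∩ Aᶜ),
        CoInvariant T (PA ∩ Aᶜ),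
        ∃ B C : Set Ω, Invariant T B ∧ CoInvariant T C ∧ A =ᵐ[μ] (B ∩ C : Set Ω) ] :=
  statement10_general T A hA FA PA hFA hPA

end PaperAtoms
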